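/- arXiv:1411.5232 — 8 statements merged into one kernel-verified Lean document; each statement's English description precedes it below -/
import Mathlib

section
/- For a polynomial f in a real variable x of degree d ≥ 2, define the backward difference operator D by (Df)(x) = f(x) - f(x-1). Then the (d-2)-fold iterated difference of the monomial x^d satisfies D^{d-2}(x^d) = (d!/24)(12x^2 - 12(d-2)x + 3d^2 - 11d + 10). -/
/-!
The backward difference is a shifted forward difference: `f y - f (y - h) = Δ_[h] f (y - h)`,
so `n` backward differences at `y` are `n` forward differences at `y - n • h`. Expanding
`(r + 1) ^ m` binomially and discarding the powers below `k`, which `Δ_[1] ^[k]` kills, gives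
`Δ_[1] ^[k + 1] r ^ (k + j) = ∑_{i < j} C(k + j, k + i) Δ_[1] ^[k] r ^ (k + i)`. Induction on `k`
then yields `Δ_[1] ^[k] r ^ (k + 1) = (k + 1)! (r + k / 2)` and
`Δ_[1] ^[k] r ^ (k + 2) = (k + 2)! / 24 (12 r² + 12 k r + 3 k² + k)`; substituting `r = x - k`
with `k = d - 2` gives the claim.
-/

open Finset Function fwdDiff Nat

section CommRing

variable {R : Type*} [CommRing R]

lemma fwdDiff_pow (m : ℕ) :
    Δ_[1] (fun r : R ↦ r ^ m) = ∑ i ∈ range m, m.choose i • fun r : R ↦ r ^ i := by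
  ext x
  simp [nsmul_eq_mul, fwdDiff, add_pow, sum_range_succ, mul_comm]

lemma fwdDiff_iter_succ_pow_add_apply (k j : ℕ) (r : R) :
    Δ_[1] ^[k + 1] (fun r : R ↦ r ^ (k + j)) r =
      ∑ i ∈ range j, (k + j).choose (k + i) * Δ_[1] ^[k] (fun r : R ↦ r ^ (k + i)) r := by
  rw [iterate_succ_apply, fwdDiff_pow, fwdDiff_iter_finsetSum, sum_range_add,
    sum_eq_zero fun i hi ↦ ?_, zero_add]
  · simp_rw [fwdDiff_iter_const_smul, Finset.sum_apply, Pi.smul_apply, nsmul_eq_mul]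
  · rw [fwdDiff_iter_const_smul, fwdDiff_iter_pow_eq_zero_of_lt (mem_range.mp hi), smul_zero]

end CommRing

section Field

variable {K : Type*} [Field K] [CharZero K]

lemma fwdDiff_iter_pow_succ_self_apply (k : ℕ) (r : K) :
    Δ_[1] ^[k] (fun r : K ↦ r ^ (k + 1)) r = (k + 1)! * (r + k / 2) := by
  induction k generalizing r with
  | zero => simp
  | succ k ih =>
    rw [fwdDiff_iter_succ_pow_add_apply k 2, sum_range_succ, sum_range_one, add_zero, ih,
      fwdDiff_iter_eq_factorial, Nat.cast_add_choose]
    simp [factorial_succ]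
    field_simp
    ring

lemma fwdDiff_iter_pow_add_two_apply (k : ℕ) (r : K) :
    Δ_[1] ^[k] (fun r : K ↦ r ^ (k + 2)) r =
      (k + 2)! / 24 * (12 * r ^ 2 + 12 * k * r + 3 * k ^ 2 + k) := by
  induction k generalizing r with
  | zero => simp; ring
  | succ k ih =>
    rw [fwdDiff_iter_succ_pow_add_apply k 3, sum_range_succ, sum_range_succ, sum_range_one,
      add_zero, fwdDiff_iter_eq_factorial, fwdDiff_iter_pow_succ_self_apply, ih,
      Nat.cast_add_choose, show k + 3 = k + 1 + 2 from rfl, Nat.cast_add_choose]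
    simp [factorial_succ]
    field_simp
    ring

end Field

lemma iterate_bwdDiff_apply {M G : Type*} [AddCommGroup M] [AddCommGroup G] (h : M) (n : ℕ)
    (f : M → G) (y : M) :
    (fun f : M → G ↦ fun y ↦ f y - f (y - h))^[n] f y = Δ_[h] ^[n] f (y - n • h) := by
  induction n generalizing y with
  | zero => simp
  | succ n ih =>
    rw [iterate_succ_apply', iterate_succ_apply', ih, ih, fwdDiff, succ_nsmul,
      ← sub_sub, sub_add_cancel, sub_right_comm y h]

/-- Backward difference: `D^[d-2] (x ↦ x^d) = (d!/24)(12x² - 12(d-2)x + 3d² - 11d + 10)`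
for `d ≥ 2`. -/
theorem stmt_1 (d : ℕ) (hd : 2 ≤ d) (x : ℝ) :
    ((fun f : ℝ → ℝ => fun y => f y - f (y - 1))^[d - 2] (fun y : ℝ => y ^ d)) x
      = (Nat.factorial d : ℝ) / 24 *
        (12 * x ^ 2 - 12 * ((d : ℝ) - 2) * x + 3 * (d : ℝ) ^ 2 - 11 * d + 10) := by
  obtain ⟨k, rfl⟩ := Nat.exists_eq_add_of_le' hd
  rw [Nat.add_sub_cancel, iterate_bwdDiff_apply, nsmul_one, fwdDiff_iter_pow_add_two_apply]
  push_cast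
  ring
end

section
/- Let d1 be a positive integer and μ1, μ2 positive reals. If ∏_{j=1}^{d1}(x - j/μ1) · (x - 1/μ2)(x - 2/μ2)(x - 3/(2μ2)) = ∏_{j=1}^{d1+3}(x - j) as polynomials in x, then d1 = 1, μ1 = 1 and μ2 = 1/2. -/
/-!
Comparing roots, the multiset `{j/μ₁ : 1 ≤ j ≤ d₁} + {a, 2a, 3a/2}` with `a = 1/μ₂` equals
`{1, …, d₁ + 3}`. Thus `a` and `3a/2` are positive integers, so `a ≥ 2`, and the root `1`
must be some `j/μ₁`; as `1/μ₁` is an integer too, `μ₁ = 1`. Comparing sums of roots then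
gives `9a/2 = 3d₁ + 6`, while `2a ≤ d₁ + 3`; hence `d₁ ≤ 1`, so `d₁ = 1` and `a = 2`.
-/

open Polynomial

theorem Polynomial.roots_prod_X_sub_C_apply {R ι : Type*} [CommRing R] [IsDomain R]
    (s : Finset ι) (f : ι → R) : (∏ i ∈ s, (X - C (f i))).roots = s.val.map f := by
  have := roots_multiset_prod_X_sub_C (s.val.map f)
  rwa [Multiset.map_map] at this

theorem Polynomial.roots_X_sub_C_mul_X_sub_C_mul_X_sub_C {R : Type*} [CommRing R] [IsDomain R]
    (a b c : R) : ((X - C a) * (X - C b) * (X - C c)).roots = {a, b, c} := by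
  simpa [mul_assoc] using roots_multiset_prod_X_sub_C ({a, b, c} : Multiset R)

theorem Finset.sum_Icc_one_add_three_natCast {R : Type*} [CommSemiring R] (n : ℕ) :
    ∑ j ∈ Icc 1 (n + 3), (j : R) = ∑ j ∈ Icc 1 n, (j : R) + (3 * n + 6) := by
  rw [sum_Icc_succ_top (by omega), sum_Icc_succ_top (by omega), sum_Icc_succ_top (by omega)]
  push_cast
  ring

theorem one_le_and_eq_one_of_map_Icc_mul_add_eq_map_Icc {n : ℕ} {a b : ℝ}
    (h : (Finset.Icc 1 n).val.map (fun j : ℕ => (j : ℝ) * b) + {a, 2 * a, 3 / 2 * a}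
      = (Finset.Icc 1 (n + 3)).val.map (fun j : ℕ => (j : ℝ))) :
    1 ≤ n ∧ b = 1 := by
  have natCast_of_mem : ∀ x ∈ (Finset.Icc 1 n).val.map (fun j : ℕ => (j : ℝ) * b) +
      {a, 2 * a, 3 / 2 * a}, ∃ k : ℕ, (1 ≤ k ∧ k ≤ n + 3) ∧ (k : ℝ) = x := by
    intro x hx
    rw [h] at hx
    simpa using hx
  obtain ⟨k, ⟨hk, -⟩, rfl⟩ := natCast_of_mem a (by simp)
  obtain ⟨l, -, hl⟩ := natCast_of_mem (3 / 2 * k) (by simp)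
  have two_le_k : (2 : ℝ) ≤ k := by
    have : 2 * l = 3 * k := by exact_mod_cast (by linarith : (2 * l : ℝ) = 3 * k)
    exact_mod_cast (by omega : 2 ≤ k)
  have one_mem : (1 : ℝ) ∈ (Finset.Icc 1 n).val.map (fun j : ℕ => (j : ℝ) * b) := by
    have : (1 : ℝ) ∈ (Finset.Icc 1 (n + 3)).val.map (fun j : ℕ => (j : ℝ)) := by simp
    rcases Multiset.mem_add.1 (h ▸ this) with h1 | h1
    · exact h1
    · simp only [Multiset.insert_eq_cons, Multiset.mem_cons, Multiset.mem_singleton] at h1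
      rcases h1 with h1 | h1 | h1 <;> linarith
  obtain ⟨j, ⟨hj, hjn⟩, hjb⟩ : ∃ j : ℕ, (1 ≤ j ∧ j ≤ n) ∧ (j : ℝ) * b = 1 := by
    simpa using one_mem
  have b_mem : b ∈ (Finset.Icc 1 n).val.map (fun j : ℕ => (j : ℝ) * b) :=
    Multiset.mem_map.2 ⟨1, Finset.mem_Icc.2 ⟨le_rfl, hj.trans hjn⟩, by simp⟩
  obtain ⟨i, -, rfl⟩ := natCast_of_mem b (Multiset.mem_add.2 (.inl b_mem))
  have : j * i = 1 := by exact_mod_cast hjb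
  exact ⟨hj.trans hjn, by simp [Nat.eq_one_of_mul_eq_one_left this]⟩

theorem eq_of_map_Icc_mul_add_eq_map_Icc {n : ℕ} {a b : ℝ}
    (h : (Finset.Icc 1 n).val.map (fun j : ℕ => (j : ℝ) * b) + {a, 2 * a, 3 / 2 * a}
      = (Finset.Icc 1 (n + 3)).val.map (fun j : ℕ => (j : ℝ))) :
    n = 1 ∧ b = 1 ∧ a = 2 := by
  obtain ⟨one_le_n, rfl⟩ := one_le_and_eq_one_of_map_Icc_mul_add_eq_map_Icc h
  have two_a_le : 2 * a ≤ n + 3 := by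
    obtain ⟨k, hk, hka⟩ : ∃ k ∈ Finset.Icc 1 (n + 3), (k : ℝ) = 2 * a :=
      Multiset.mem_map.1 (h ▸ Multiset.mem_add.2 (.inr (by simp)))
    rw [← hka]
    exact_mod_cast (Finset.mem_Icc.1 hk).2
  have sum_eq := congrArg Multiset.sum h
  simp only [mul_one, Finset.sum_map_val, Multiset.insert_eq_cons,
    Multiset.sum_add, Multiset.sum_cons, Multiset.sum_singleton,
    Finset.sum_Icc_one_add_three_natCast] at sum_eq
  have hn : n = 1 := le_antisymm (by exact_mod_cast (by linarith : (n : ℝ) ≤ 1)) one_le_n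
  subst hn
  exact ⟨rfl, rfl, by norm_num at sum_eq; linarith⟩

theorem stmt_5_general (d1 : ℕ) (μ1 μ2 : ℝ)
    (h : (∏ j ∈ Finset.Icc 1 d1, (X - C ((j : ℝ) / μ1))) *
         ((X - C (1 / μ2)) * (X - C (2 / μ2)) * (X - C (3 / (2 * μ2))))
       = ∏ j ∈ Finset.Icc 1 (d1 + 3), (X - C (j : ℝ))) :
    d1 = 1 ∧ μ1 = 1 ∧ μ2 = 1 / 2 := by
  have rhs_ne_zero : (∏ j ∈ Finset.Icc 1 (d1 + 3), (X - C (j : ℝ))) ≠ 0 :=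
    (monic_prod_of_monic _ _ fun j _ => monic_X_sub_C _).ne_zero
  have roots_h := congrArg roots h
  rw [roots_mul (h ▸ rhs_ne_zero), roots_prod_X_sub_C_apply, roots_prod_X_sub_C_apply,
    roots_X_sub_C_mul_X_sub_C_mul_X_sub_C] at roots_h
  have roots_eq : (Finset.Icc 1 d1).val.map (fun j : ℕ => (j : ℝ) * μ1⁻¹) +
      {μ2⁻¹, 2 * μ2⁻¹, 3 / 2 * μ2⁻¹} =
      (Finset.Icc 1 (d1 + 3)).val.map (fun j : ℕ => (j : ℝ)) := by
    convert roots_h using 5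
    · simp [div_eq_mul_inv]
    all_goals ring
  obtain ⟨hd1, hμ1, hμ2⟩ := eq_of_map_Icc_mul_add_eq_map_Icc roots_eq
  exact ⟨hd1, inv_eq_one.1 hμ1, by rw [one_div, ← hμ2, inv_inv]⟩

/-- If `∏_{j=1}^{d1}(x - j/μ1) · (x - 1/μ2)(x - 2/μ2)(x - 3/(2μ2)) = ∏_{j=1}^{d1+3}(x - j)`
with `d1 ≥ 1` and `μ1, μ2 > 0`, then `d1 = 1`, `μ1 = 1`, `μ2 = 1/2`. -/
theorem stmt_5 (d1 : ℕ) (hd1 : 1 ≤ d1) (μ1 μ2 : ℝ) (hμ1 : 0 < μ1) (hμ2 : 0 < μ2)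
    (h : (∏ j ∈ Finset.Icc 1 d1, (X - C ((j : ℝ) / μ1))) *
         ((X - C (1 / μ2)) * (X - C (2 / μ2)) * (X - C (3 / (2 * μ2))))
       = ∏ j ∈ Finset.Icc 1 (d1 + 3), (X - C (j : ℝ))) :
    d1 = 1 ∧ μ1 = 1 ∧ μ2 = 1 / 2 :=
  stmt_5_general d1 μ1 μ2 h
end

section
/- Let d1, d2 be positive integers with d2 ≥ 5 odd, and μ1, μ2 positive reals. Then there is no solution of the polynomial identity ∏_{j=1}^{d1}(x - j/μ1) · ∏_{j=1}^{d2-1}(x - j/μ2) · (x - d2/(2μ2)) = ∏_{j=1}^{d1+d2}(x - j). -/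
/-!
Comparing roots, the multiset of the numbers `j / μ1`, `j / μ2` (`j < d2`) and `d2 / (2 μ2)` is
`{1, …, d1 + d2}`. Writing `d2 = 2k + 1`, the roots `k / μ2` and `d2 / (2 μ2)` are integers at
distance `1 / (2 μ2)`, so `μ2 ≤ 1/2`; hence the root `1` can only be some `j / μ1`, which forces
`μ1 = 1`. The sums of the roots then give `d2 / μ2 = 2 d1 + d2 + 1`, while the largest root
`(d2 - 1) / μ2 ≤ d1 + d2` gives `1 / μ2 ≥ d1 + 1`. Together `d1 (d2 - 2) ≤ 1`, which fails for
`d1 ≥ 1`, `d2 ≥ 5`.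
-/

open Polynomial Finset

theorem Polynomial.roots_prod_X_sub_C_map {ι R : Type*} [CommRing R] [IsDomain R]
    (s : Finset ι) (f : ι → R) : (∏ j ∈ s, (X - C (f j))).roots = s.val.map f := by
  rw [Finset.prod_eq_multiset_prod, ← roots_multiset_prod_X_sub_C (s.val.map f), Multiset.map_map]
  rfl

theorem sum_Icc_natCast (n : ℕ) : ∑ j ∈ Icc 1 n, (j : ℝ) = n * (n + 1) / 2 := by
  induction n with
  | zero => simp
  | succ n ih =>
    rw [sum_Icc_succ_top (by omega), ih]
    push_cast; ring

theorem le_sub_of_div_eq_natCast {a b μ : ℝ} {p q : ℕ} (hμ : 0 < μ) (hab : a < b)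
    (hp : a / μ = p) (hq : b / μ = q) : μ ≤ b - a := by
  have hpq : p < q := by
    exact_mod_cast hp ▸ hq ▸ div_lt_div_of_pos_right hab hμ
  have hgap : (1 : ℝ) ≤ (b - a) / μ := by
    rw [sub_div, hp, hq, le_sub_iff_add_le']
    exact_mod_cast hpq
  rwa [one_le_div hμ] at hgap

noncomputable def leftRoots (d1 d2 : ℕ) (μ1 μ2 : ℝ) : Multiset ℝ :=
  (Icc 1 d1).val.map (fun j : ℕ => (j : ℝ) / μ1) +
    (Icc 1 (d2 - 1)).val.map (fun j : ℕ => (j : ℝ) / μ2) + {(d2 : ℝ) / (2 * μ2)}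

theorem leftRoots_eq_of_prod_eq {d1 d2 : ℕ} {μ1 μ2 : ℝ}
    (h : (∏ j ∈ Icc 1 d1, (X - C ((j : ℝ) / μ1))) *
       (∏ j ∈ Icc 1 (d2 - 1), (X - C ((j : ℝ) / μ2))) *
       (X - C ((d2 : ℝ) / (2 * μ2)))
     = ∏ j ∈ Icc 1 (d1 + d2), (X - C (j : ℝ))) :
    leftRoots d1 d2 μ1 μ2 = (Icc 1 (d1 + d2)).val.map Nat.cast := by
  have hne (s : Finset ℕ) (f : ℕ → ℝ) : ∏ j ∈ s, (X - C (f j)) ≠ 0 :=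
    (monic_prod_of_monic _ _ fun j _ => monic_X_sub_C (f j)).ne_zero
  have := congrArg roots h
  rwa [roots_mul (mul_ne_zero (mul_ne_zero (hne _ _) (hne _ _)) (X_sub_C_ne_zero _)),
    roots_mul (mul_ne_zero (hne _ _) (hne _ _)), roots_X_sub_C, roots_prod_X_sub_C_map,
    roots_prod_X_sub_C_map, roots_prod_X_sub_C_map] at this

section leftRoots

variable {d1 d2 : ℕ} {μ1 μ2 : ℝ}

theorem natCast_div_μ1_mem_leftRoots {j : ℕ} (hj : j ∈ Icc 1 d1) :
    (j : ℝ) / μ1 ∈ leftRoots d1 d2 μ1 μ2 := by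
  simp only [leftRoots, Multiset.mem_add, Multiset.mem_map, Finset.mem_val]
  exact Or.inl (Or.inl ⟨j, hj, rfl⟩)

theorem natCast_div_μ2_mem_leftRoots {j : ℕ} (hj : j ∈ Icc 1 (d2 - 1)) :
    (j : ℝ) / μ2 ∈ leftRoots d1 d2 μ1 μ2 := by
  simp only [leftRoots, Multiset.mem_add, Multiset.mem_map, Finset.mem_val]
  exact Or.inl (Or.inr ⟨j, hj, rfl⟩)

theorem natCast_div_two_mul_mem_leftRoots : (d2 : ℝ) / (2 * μ2) ∈ leftRoots d1 d2 μ1 μ2 := by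
  simp [leftRoots]

theorem sum_leftRoots (hd2 : 1 ≤ d2) :
    (leftRoots d1 d2 μ1 μ2).sum = d1 * (d1 + 1) / 2 / μ1 + d2 ^ 2 / 2 / μ2 := by
  simp only [leftRoots, Multiset.sum_add, Multiset.sum_singleton, ← Finset.sum_eq_multiset_sum,
    ← Finset.sum_div, sum_Icc_natCast, Nat.cast_pred hd2]
  ring

theorem exists_natCast_eq_of_mem_leftRoots {x : ℝ}
    (h : leftRoots d1 d2 μ1 μ2 = (Icc 1 (d1 + d2)).val.map Nat.cast)
    (hx : x ∈ leftRoots d1 d2 μ1 μ2) :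
    ∃ n ∈ Icc 1 (d1 + d2), (n : ℝ) = x := by
  simpa [h] using hx

theorem two_mul_le_one_of_leftRoots_eq (hμ2 : 0 < μ2) (hd2 : 3 ≤ d2) (hodd : Odd d2)
    (h : leftRoots d1 d2 μ1 μ2 = (Icc 1 (d1 + d2)).val.map Nat.cast) : 2 * μ2 ≤ 1 := by
  obtain ⟨k, rfl⟩ := hodd
  obtain ⟨p, -, hp⟩ := exists_natCast_eq_of_mem_leftRoots h
    (natCast_div_μ2_mem_leftRoots (j := k) (mem_Icc.2 ⟨by omega, by omega⟩))
  obtain ⟨q, -, hq⟩ := exists_natCast_eq_of_mem_leftRoots h natCast_div_two_mul_mem_leftRoots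
  have := le_sub_of_div_eq_natCast (b := ((2 * k + 1 : ℕ) : ℝ) / 2) hμ2 (by push_cast; linarith)
    hp.symm (by rw [div_div]; exact hq.symm)
  push_cast at this
  linarith

theorem eq_one_of_leftRoots_eq (hμ1 : 0 < μ1) (hμ2 : 2 * μ2 ≤ 1) (hd1 : 1 ≤ d1) (hd2 : 2 ≤ d2)
    (h : leftRoots d1 d2 μ1 μ2 = (Icc 1 (d1 + d2)).val.map Nat.cast) : μ1 = 1 := by
  have hle : μ1 ≤ 1 := by
    obtain ⟨n, hn, hn1⟩ := exists_natCast_eq_of_mem_leftRoots h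
      (natCast_div_μ1_mem_leftRoots (d2 := d2) (μ2 := μ2) (mem_Icc.2 ⟨le_rfl, hd1⟩))
    rw [← one_le_div hμ1]
    calc (1 : ℝ) ≤ n := by exact_mod_cast (mem_Icc.1 hn).1
      _ = 1 / μ1 := by rw [hn1, Nat.cast_one]
  have hone : (1 : ℝ) ∈ leftRoots d1 d2 μ1 μ2 := by
    rw [h]
    exact Multiset.mem_map.2
      ⟨1, mem_Icc.2 (⟨le_rfl, by omega⟩ : 1 ≤ 1 ∧ 1 ≤ d1 + d2), Nat.cast_one⟩
  simp only [leftRoots, Multiset.mem_add, Multiset.mem_map, Finset.mem_val, mem_Icc,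
    Multiset.mem_singleton] at hone
  rcases hone with (⟨j, ⟨hj, -⟩, hj1⟩ | ⟨j, ⟨hj, -⟩, hj1⟩) | hc
  · have : (1 : ℝ) ≤ j := by exact_mod_cast hj
    linarith [eq_of_div_eq_one hj1]
  · have : (1 : ℝ) ≤ j := by exact_mod_cast hj
    linarith [eq_of_div_eq_one hj1]
  · have : (2 : ℝ) ≤ d2 := by exact_mod_cast hd2
    linarith [eq_of_div_eq_one hc.symm]

theorem sub_one_div_le_of_leftRoots_eq (hd2 : 2 ≤ d2)
    (h : leftRoots d1 d2 μ1 μ2 = (Icc 1 (d1 + d2)).val.map Nat.cast) :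
    ((d2 : ℝ) - 1) / μ2 ≤ d1 + d2 := by
  obtain ⟨n, hn, hn1⟩ := exists_natCast_eq_of_mem_leftRoots h
    (natCast_div_μ2_mem_leftRoots (j := d2 - 1) (mem_Icc.2 ⟨by omega, le_rfl⟩))
  rw [← Nat.cast_pred (by omega), ← hn1, ← Nat.cast_add]
  exact_mod_cast (mem_Icc.1 hn).2

theorem div_eq_of_leftRoots_eq (hd2 : 1 ≤ d2) (hμ1 : μ1 = 1)
    (h : leftRoots d1 d2 μ1 μ2 = (Icc 1 (d1 + d2)).val.map Nat.cast) :
    (d2 : ℝ) / μ2 = 2 * d1 + d2 + 1 := by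
  have hsum := congrArg Multiset.sum h
  rw [sum_leftRoots hd2, hμ1, ← Finset.sum_eq_multiset_sum, sum_Icc_natCast] at hsum
  push_cast at hsum
  refine mul_left_cancel₀ (Nat.cast_ne_zero.2 (by omega) : (d2 : ℝ) ≠ 0) ?_
  linear_combination 2 * hsum

end leftRoots

/-- For `d1 ≥ 1`, `d2 ≥ 5` odd, `μ1, μ2 > 0`, the polynomial identity
`∏_{j=1}^{d1}(x - j/μ1) · ∏_{j=1}^{d2-1}(x - j/μ2) · (x - d2/(2μ2)) = ∏_{j=1}^{d1+d2}(x - j)`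
has no solution. -/
theorem stmt_6 (d1 d2 : ℕ) (hd1 : 1 ≤ d1) (hd2 : 5 ≤ d2) (hodd : Odd d2)
    (μ1 μ2 : ℝ) (hμ1 : 0 < μ1) (hμ2 : 0 < μ2) :
    ¬ ((∏ j ∈ Finset.Icc 1 d1, (X - C ((j : ℝ) / μ1))) *
       (∏ j ∈ Finset.Icc 1 (d2 - 1), (X - C ((j : ℝ) / μ2))) *
       (X - C ((d2 : ℝ) / (2 * μ2)))
     = ∏ j ∈ Finset.Icc 1 (d1 + d2), (X - C (j : ℝ))) := by
  intro h
  have hroots := leftRoots_eq_of_prod_eq h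
  have hμ1_eq := eq_one_of_leftRoots_eq hμ1
    (two_mul_le_one_of_leftRoots_eq hμ2 (by omega) hodd hroots) hd1 (by omega) hroots
  have hlast := sub_one_div_le_of_leftRoots_eq (by omega) hroots
  have htotal := div_eq_of_leftRoots_eq (by omega) hμ1_eq hroots
  have hgap : (d1 : ℝ) + 1 ≤ 1 / μ2 := by
    rw [sub_div, htotal] at hlast
    linarith
  have hd1' : (1 : ℝ) ≤ d1 := by exact_mod_cast hd1
  have hd2' : (5 : ℝ) ≤ d2 := by exact_mod_cast hd2
  have : (d2 : ℝ) * (d1 + 1) ≤ 2 * d1 + d2 + 1 := by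
    rw [← htotal, div_eq_mul_one_div]
    exact mul_le_mul_of_nonneg_left hgap (by linarith)
  nlinarith
end

section
/- For positive reals μ1, μ2, there is no solution of the polynomial identity (x - 1/μ1)(x - 2/μ1)(x - 3/(2μ1)) · (x - 1/μ2)(x - 2/μ2)(x - 3/(2μ2)) = ∏_{j=1}^{6}(x - j). -/
/-!
Write `a = 1/μ1`, `b = 1/μ2`; the left side is the product of the two cubics with roots
`t, 2t, 3t/2` for `t = a, b`. If the identity held, `5` would be a root of one of them, say the
one for `t`. Then `t ∈ {5, 5/2, 10/3}`, and in each case that cubic has a root (`2t = 10`, or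
`t` itself) outside `{1, …, 6}`, which cannot be a root of the right side.
-/

open Polynomial

noncomputable def scaledTriple (t : ℝ) : ℝ[X] :=
  (X - C t) * (X - C (2 * t)) * (X - C (3 / 2 * t))

lemma isRoot_scaledTriple {t x : ℝ} :
    (scaledTriple t).IsRoot x ↔ x = t ∨ x = 2 * t ∨ x = 3 / 2 * t := by
  simp only [scaledTriple, IsRoot.def, eval_mul, mul_eq_zero, eval_sub, eval_X, eval_C,
    sub_eq_zero, or_assoc]

lemma isRoot_prod_Icc_X_sub_C {n : ℕ} {x : ℝ} :
    (∏ j ∈ Finset.Icc 1 n, (X - C (j : ℝ))).IsRoot x ↔ ∃ j ∈ Finset.Icc 1 n, x = j := by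
  simp only [IsRoot.def, eval_prod, Finset.prod_eq_zero_iff, eval_sub, eval_X, eval_C, sub_eq_zero]

lemma exists_isRoot_scaledTriple_not_mem_Icc {t : ℝ} (h5 : (scaledTriple t).IsRoot 5) :
    ∃ x, (scaledTriple t).IsRoot x ∧ ¬ ∃ j ∈ Finset.Icc 1 (6 : ℕ), x = (j : ℝ) := by
  simp only [isRoot_scaledTriple, Finset.mem_Icc] at h5 ⊢
  rcases h5 with h | h | h
  · refine ⟨2 * t, by simp, ?_⟩
    rintro ⟨j, ⟨-, hj⟩, hx⟩
    have : (j : ℝ) ≤ 6 := by exact_mod_cast hj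
    linarith
  all_goals
    refine ⟨t, by simp, ?_⟩
    rintro ⟨j, ⟨hj1, hj6⟩, hx⟩
    interval_cases j <;> norm_num at hx <;> linarith

lemma scaledTriple_mul_ne_prod_Icc (a b : ℝ) :
    scaledTriple a * scaledTriple b ≠ ∏ j ∈ Finset.Icc 1 (6 : ℕ), (X - C (j : ℝ)) := by
  intro h
  have hroot : ∀ x, (scaledTriple a).IsRoot x ∨ (scaledTriple b).IsRoot x ↔
      ∃ j ∈ Finset.Icc 1 (6 : ℕ), x = (j : ℝ) := by
    intro x
    rw [← root_mul, h, isRoot_prod_Icc_X_sub_C]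
  rcases (hroot 5).2 ⟨5, by simp, by norm_num⟩ with h5 | h5
  · obtain ⟨x, hx, hx6⟩ := exists_isRoot_scaledTriple_not_mem_Icc h5
    exact hx6 ((hroot x).1 (Or.inl hx))
  · obtain ⟨x, hx, hx6⟩ := exists_isRoot_scaledTriple_not_mem_Icc h5
    exact hx6 ((hroot x).1 (Or.inr hx))

lemma X_sub_C_inv_mul_eq_scaledTriple (μ : ℝ) :
    (X - C (1 / μ)) * (X - C (2 / μ)) * (X - C (3 / (2 * μ))) = scaledTriple (1 / μ) := by
  rw [scaledTriple, mul_one_div, show 3 / (2 * μ) = 3 / 2 * (1 / μ) by ring]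

theorem stmt_7_general (μ1 μ2 : ℝ) :
    ¬ ((X - C (1 / μ1)) * (X - C (2 / μ1)) * (X - C (3 / (2 * μ1))) *
       ((X - C (1 / μ2)) * (X - C (2 / μ2)) * (X - C (3 / (2 * μ2))))
     = ∏ j ∈ Finset.Icc 1 (6:ℕ), (X - C (j : ℝ))) := by
  rw [X_sub_C_inv_mul_eq_scaledTriple, X_sub_C_inv_mul_eq_scaledTriple]
  exact scaledTriple_mul_ne_prod_Icc _ _

/-- For `μ1, μ2 > 0`, there is no solution of
`(x - 1/μ1)(x - 2/μ1)(x - 3/(2μ1)) · (x - 1/μ2)(x - 2/μ2)(x - 3/(2μ2)) = ∏_{j=1}^{6}(x - j)`. -/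
theorem stmt_7 (μ1 μ2 : ℝ) (hμ1 : 0 < μ1) (hμ2 : 0 < μ2) :
    ¬ ((X - C (1 / μ1)) * (X - C (2 / μ1)) * (X - C (3 / (2 * μ1))) *
       ((X - C (1 / μ2)) * (X - C (2 / μ2)) * (X - C (3 / (2 * μ2))))
     = ∏ j ∈ Finset.Icc 1 (6:ℕ), (X - C (j : ℝ))) :=
  stmt_7_general μ1 μ2
end

section
/- Let d1, d2 be odd integers with d1 ≥ 5 and d2 ≥ 5, and μ1, μ2 positive reals. Then there is no solution of the polynomial identity ∏_{j=1}^{d1-1}(x - j/μ1) · (x - d1/(2μ1)) · ∏_{j=1}^{d2-1}(x - j/μ2) · (x - d2/(2μ2)) = ∏_{j=1}^{d1+d2}(x - j). -/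
/-!
Every root of the right-hand side is one of the integers `1, …, d₁ + d₂`. On the left, `1/μ`
is a root, so `μ = 1/k` for a positive integer `k`; then `d/(2μ) = dk/2` is a root too, and
since `d` is odd this forces `k` to be even. Hence every root `jk` and `dk/2` of a left-hand
factor is at least `2`, so `1`, a root of the right-hand side, is not a root of the left-hand
side.
-/

open Polynomial

lemma isRoot_prod_X_sub_C_iff {R ι : Type*} [CommRing R] [IsDomain R] (s : Finset ι)
    (a : ι → R) (r : R) : (∏ j ∈ s, (X - C (a j))).IsRoot r ↔ ∃ j ∈ s, a j = r := by
  simp only [isRoot_prod, root_X_sub_C]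

noncomputable def scaledFactor (d : ℕ) (μ : ℝ) : ℝ[X] :=
  (∏ j ∈ Finset.Icc 1 (d - 1), (X - C ((j : ℝ) / μ))) * (X - C ((d : ℝ) / (2 * μ)))

namespace scaledFactor

variable {d : ℕ} {μ : ℝ}

lemma isRoot_iff {r : ℝ} :
    (scaledFactor d μ).IsRoot r ↔
      (∃ j ∈ Finset.Icc 1 (d - 1), (j : ℝ) / μ = r) ∨ d / (2 * μ) = r := by
  rw [scaledFactor, root_mul, isRoot_prod_X_sub_C_iff, root_X_sub_C]

lemma isRoot_inv (hd : 2 ≤ d) : (scaledFactor d μ).IsRoot μ⁻¹ :=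
  isRoot_iff.2 <| .inl ⟨1, Finset.mem_Icc.2 ⟨le_rfl, by omega⟩, by simp⟩

lemma isRoot_half : (scaledFactor d μ).IsRoot (d / (2 * μ)) :=
  isRoot_iff.2 <| .inr rfl

lemma not_isRoot_one (hodd : Odd d) (hd : 2 ≤ d)
    (hroots : ∀ r, (scaledFactor d μ).IsRoot r → ∃ n : ℕ, 1 ≤ n ∧ (n : ℝ) = r) :
    ¬ (scaledFactor d μ).IsRoot 1 := by
  obtain ⟨k, hk, hkμ⟩ := hroots _ (isRoot_inv hd)
  obtain ⟨m, -, hmμ⟩ := hroots _ isRoot_half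
  have hμ : μ ≠ 0 := by rintro rfl; simp at hkμ; omega
  have hdk : d * k = 2 * m := by
    have : (d : ℝ) * k = 2 * m := by rw [hkμ, hmμ]; field_simp
    exact_mod_cast this
  have hk2 : 2 ≤ k := by
    have : Even k := (Nat.even_mul.1 ⟨m, by omega⟩).resolve_left (Nat.not_even_iff_odd.2 hodd)
    obtain ⟨s, rfl⟩ := this
    omega
  have hm2 : 2 ≤ m := by nlinarith
  rintro h1
  rcases isRoot_iff.1 h1 with ⟨j, hj, hj1⟩ | hd1
  · have hj : 1 ≤ j := (Finset.mem_Icc.1 hj).1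
    have : (j : ℝ) * k = 1 := by rw [hkμ, ← div_eq_mul_inv, hj1]
    have : j * k = 1 := by exact_mod_cast this
    nlinarith
  · have : (m : ℝ) = 1 := by rw [hmμ, hd1]
    have : m = 1 := by exact_mod_cast this
    omega

end scaledFactor

theorem stmt_8_general (d1 d2 : ℕ) (hd1 : 5 ≤ d1) (hd2 : 5 ≤ d2)
    (hodd1 : Odd d1) (hodd2 : Odd d2)
    (μ1 μ2 : ℝ) :
    ¬ ((∏ j ∈ Finset.Icc 1 (d1 - 1), (X - C ((j : ℝ) / μ1))) *
       (X - C ((d1 : ℝ) / (2 * μ1))) *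
       ((∏ j ∈ Finset.Icc 1 (d2 - 1), (X - C ((j : ℝ) / μ2))) *
        (X - C ((d2 : ℝ) / (2 * μ2))))
     = ∏ j ∈ Finset.Icc 1 (d1 + d2), (X - C (j : ℝ))) := by
  change scaledFactor d1 μ1 * scaledFactor d2 μ2 ≠ _
  intro h
  have hroots : ∀ r, (scaledFactor d1 μ1 * scaledFactor d2 μ2).IsRoot r →
      ∃ n : ℕ, 1 ≤ n ∧ (n : ℝ) = r := by
    intro r hr
    obtain ⟨n, hn, rfl⟩ := (isRoot_prod_X_sub_C_iff _ _ r).1 (h ▸ hr)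
    exact ⟨n, (Finset.mem_Icc.1 hn).1, rfl⟩
  have h1 : (scaledFactor d1 μ1 * scaledFactor d2 μ2).IsRoot 1 :=
    h ▸ (isRoot_prod_X_sub_C_iff _ _ 1).2
      ⟨1, Finset.mem_Icc.2 ⟨le_rfl, by omega⟩, Nat.cast_one⟩
  rcases root_mul.1 h1 with h1 | h1
  · exact scaledFactor.not_isRoot_one hodd1 (by omega)
      (fun r hr => hroots r (root_mul_right_of_isRoot _ hr)) h1
  · exact scaledFactor.not_isRoot_one hodd2 (by omega)
      (fun r hr => hroots r (root_mul_left_of_isRoot _ hr)) h1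

/-- For odd `d1, d2 ≥ 5` and `μ1, μ2 > 0`, there is no solution of
`∏_{j=1}^{d1-1}(x - j/μ1)·(x - d1/(2μ1)) · ∏_{j=1}^{d2-1}(x - j/μ2)·(x - d2/(2μ2))
 = ∏_{j=1}^{d1+d2}(x - j)`. -/
theorem stmt_8 (d1 d2 : ℕ) (hd1 : 5 ≤ d1) (hd2 : 5 ≤ d2)
    (hodd1 : Odd d1) (hodd2 : Odd d2)
    (μ1 μ2 : ℝ) (hμ1 : 0 < μ1) (hμ2 : 0 < μ2) :
    ¬ ((∏ j ∈ Finset.Icc 1 (d1 - 1), (X - C ((j : ℝ) / μ1))) *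
       (X - C ((d1 : ℝ) / (2 * μ1))) *
       ((∏ j ∈ Finset.Icc 1 (d2 - 1), (X - C ((j : ℝ) / μ2))) *
        (X - C ((d2 : ℝ) / (2 * μ2))))
     = ∏ j ∈ Finset.Icc 1 (d1 + d2), (X - C (j : ℝ))) :=
  stmt_8_general d1 d2 hd1 hd2 hodd1 hodd2 μ1 μ2
end

section
/- For integers 1 ≤ m ≤ n, the polynomial χ(x) = ∏_{j=1}^{m}(x + j)_{m+n+1-2j} (where (s)_k is the rising factorial) is squarefree (has no repeated root) if and only if m = 1. -/
/-!
Shifted by `j`, the rising factorial `(x + j)_k` is `∏_{i<k} (x + j + i)`, a product of distinct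
linear factors. For `m = 1` this makes `χ` separable, hence squarefree. For `m ≥ 2` the root `-2`
occurs in the factor `j = 1` (as `1 + 1`) and again in the factor `j = 2` (as `2 + 0`), so
`(x + 2)²` divides `χ`.
-/

open Polynomial

theorem Finset.mul_dvd_prod_of_dvd {ι M : Type*} [CommMonoid M] [DecidableEq ι] {s : Finset ι}
    {f : ι → M} {i j : ι} (hi : i ∈ s) (hj : j ∈ s) (hij : i ≠ j) {a b : M} (ha : a ∣ f i)
    (hb : b ∣ f j) : a * b ∣ ∏ k ∈ s, f k := by
  refine (mul_dvd_mul ha hb).trans ?_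
  rw [← Finset.prod_pair hij]
  exact Finset.prod_dvd_prod_of_subset _ _ _ (Finset.insert_subset hi (by simpa using hj))

section CommSemiring

variable {R : Type*} [CommSemiring R]

theorem ascPochhammer_eq_prod_range (k : ℕ) :
    ascPochhammer R k = ∏ i ∈ Finset.range k, (X + C (i : R)) := by
  induction k with
  | zero => simp
  | succ k ih => rw [ascPochhammer_succ_right, ih, Finset.prod_range_succ, ← C_eq_natCast]

theorem ascPochhammer_comp_X_add_C (k : ℕ) (a : R) :
    (ascPochhammer R k).comp (X + C a) = ∏ i ∈ Finset.range k, (X + C (a + i)) := by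
  rw [ascPochhammer_eq_prod_range, prod_comp]
  refine Finset.prod_congr rfl fun i _ => ?_
  rw [add_comp, X_comp, C_comp, C_add, add_assoc]

theorem X_add_C_dvd_ascPochhammer_comp {k i : ℕ} (hi : i < k) (a : R) :
    X + C (a + i) ∣ (ascPochhammer R k).comp (X + C a) := by
  rw [ascPochhammer_comp_X_add_C]
  exact Finset.dvd_prod_of_mem (fun i : ℕ => X + C (a + i)) (Finset.mem_range.2 hi)

end CommSemiring

theorem separable_ascPochhammer_comp {F : Type*} [Field F] [CharZero F] (k : ℕ) (a : F) :
    ((ascPochhammer F k).comp (X + C a)).Separable := by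
  simp_rw [ascPochhammer_comp_X_add_C, ← sub_neg_eq_add X, ← C_neg]
  refine separable_prod_X_sub_C_iff'.2 fun i _ j _ hij => ?_
  exact_mod_cast add_left_cancel (neg_inj.1 hij)

/-- For `1 ≤ m ≤ n`, the Hua polynomial `χ(x) = ∏_{j=1}^{m}(x + j)_{m+n+1-2j}` of
`Ω_I(m,n)` is squarefree iff `m = 1`. -/
theorem stmt_9 (m n : ℕ) (hm : 1 ≤ m) (hmn : m ≤ n) :
    Squarefree (∏ j ∈ Finset.Icc 1 m,
        (ascPochhammer ℝ (m + n + 1 - 2 * j)).comp (X + C (j : ℝ))) ↔ m = 1 := by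
  constructor
  · intro hsq
    by_contra hne
    have hdvd₁ : X + C (2 : ℝ) ∣
        (ascPochhammer ℝ (m + n + 1 - 2 * 1)).comp (X + C ((1 : ℕ) : ℝ)) := by
      have h := X_add_C_dvd_ascPochhammer_comp (k := m + n + 1 - 2 * 1) (i := 1) (by omega)
        ((1 : ℕ) : ℝ)
      rwa [show ((1 : ℕ) : ℝ) + (1 : ℕ) = 2 by norm_num] at h
    have hdvd₂ : X + C (2 : ℝ) ∣
        (ascPochhammer ℝ (m + n + 1 - 2 * 2)).comp (X + C ((2 : ℕ) : ℝ)) := by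
      have h := X_add_C_dvd_ascPochhammer_comp (k := m + n + 1 - 2 * 2) (i := 0) (by omega)
        ((2 : ℕ) : ℝ)
      rwa [show ((2 : ℕ) : ℝ) + (0 : ℕ) = 2 by norm_num] at h
    exact not_isUnit_X_add_C 2 <| hsq _ <| Finset.mul_dvd_prod_of_dvd
      (Finset.mem_Icc.2 ⟨le_rfl, hm⟩) (Finset.mem_Icc.2 ⟨one_le_two, by omega⟩) (by decide)
      hdvd₁ hdvd₂
  · rintro rfl
    rw [Finset.Icc_self, Finset.prod_singleton]
    exact (separable_ascPochhammer_comp _ _).squarefree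
end

section
/- Let S1, S2, T be real numbers with S1 < 1/2, S2 < 1/2, S1 + S2 < 2T < 1, and 1/(1-2S1) + 1/(1-2S2) > 1/(1-2T). Then the system x1 + x2 = 1, S1·x1² + x1·x2 + S2·x2² = T has a solution with x1 > 0 and x2 > 0. -/
/-!
Substituting `x₂ = 1 - x₁` leaves a quadratic in `x₁` with leading coefficient
`-(1 - S1 - S2) < 0` and discriminant `Δ = 1 - 4T(1 - S1 - S2) - 4 S1 S2`. Writing
`a = 1 - 2S1`, `b = 1 - 2S2`, `c = 1 - 2T`, one has `Δ = c(a + b) - ab`, which is positive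
exactly when `1/a + 1/b > 1/c`. With `d = √Δ` the roots are `x₁ = (b ± d)/(a + b)`,
`x₂ = (a ∓ d)/(a + b)`, and `a² - Δ = 4(T - S1)(1 - S1 - S2)`, so for `S1 < T` the root
with `+` is positive in both coordinates. Since `S1 + S2 < 2T`, `S1 < T` or `S2 < T`, and the
second case is the first with the indices swapped.
-/

theorem mul_lt_mul_add_of_one_div_lt_add_one_div {a b c : ℝ} (ha : 0 < a) (hb : 0 < b)
    (hc : 0 < c) (h : 1 / c < 1 / a + 1 / b) : a * b < c * (a + b) := by
  rw [div_add_div _ _ ha.ne' hb.ne', div_lt_div_iff₀ hc (mul_pos ha hb)] at h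
  linarith

theorem exists_pos_solution_of_lt (S1 S2 T : ℝ) (h1 : S1 < 1 / 2) (h2 : S2 < 1 / 2)
    (hΔ : 0 ≤ 1 - 4 * T * (1 - S1 - S2) - 4 * S1 * S2) (hT : S1 < T) :
    ∃ x1 x2 : ℝ, x1 + x2 = 1 ∧ S1 * x1 ^ 2 + x1 * x2 + S2 * x2 ^ 2 = T ∧
      0 < x1 ∧ 0 < x2 := by
  obtain ⟨d, hd, hd2⟩ : ∃ d : ℝ, 0 ≤ d ∧ d ^ 2 = 1 - 4 * T * (1 - S1 - S2) - 4 * S1 * S2 :=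
    ⟨√_, Real.sqrt_nonneg _, Real.sq_sqrt hΔ⟩
  have ha : 0 < 1 - 2 * S1 := by linarith
  obtain ⟨s, hs, hs_eq⟩ : ∃ s, 0 < s ∧ s = (1 - 2 * S1) + (1 - 2 * S2) := ⟨_, by linarith, rfl⟩
  have hda : d < 1 - 2 * S1 := by
    have hsq : (1 - 2 * S1) ^ 2 - d ^ 2 = 4 * (T - S1) * (1 - S1 - S2) := by
      rw [hd2]; ring
    have : d ^ 2 < (1 - 2 * S1) ^ 2 := by nlinarith
    exact (pow_lt_pow_iff_left₀ hd ha.le two_ne_zero).mp this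
  refine ⟨(1 - 2 * S2 + d) / _, (1 - 2 * S1 - d) / _, ?_, ?_,
    div_pos (by linarith) hs, div_pos (by linarith) hs⟩
  · field_simp
    linear_combination -hs_eq
  · field_simp
    subst hs_eq
    linear_combination (S1 + S2 - 1) * hd2

/-- If `S1, S2 < 1/2`, `S1 + S2 < 2T < 1` and
`1/(1-2S1) + 1/(1-2S2) > 1/(1-2T)`, then the system
`x1 + x2 = 1`, `S1 x1² + x1 x2 + S2 x2² = T` has a solution with `x1, x2 > 0`. -/
theorem stmt_17 (S1 S2 T : ℝ) (h1 : S1 < 1 / 2) (h2 : S2 < 1 / 2)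
    (h3 : S1 + S2 < 2 * T) (h4 : 2 * T < 1)
    (h5 : 1 / (1 - 2 * S1) + 1 / (1 - 2 * S2) > 1 / (1 - 2 * T)) :
    ∃ x1 x2 : ℝ, x1 + x2 = 1 ∧ S1 * x1 ^ 2 + x1 * x2 + S2 * x2 ^ 2 = T ∧
      0 < x1 ∧ 0 < x2 := by
  have hΔ : 0 ≤ 1 - 4 * T * (1 - S1 - S2) - 4 * S1 * S2 := by
    have := mul_lt_mul_add_of_one_div_lt_add_one_div (a := 1 - 2 * S1) (b := 1 - 2 * S2)
      (by linarith) (by linarith) (by linarith) h5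
    linear_combination this
  rcases lt_or_ge S1 T with hT | hT
  · exact exists_pos_solution_of_lt S1 S2 T h1 h2 hΔ hT
  · obtain ⟨x2, x1, hsum, heq, hx2, hx1⟩ :=
      exists_pos_solution_of_lt S2 S1 T h2 h1 (by linarith) (by linarith)
    exact ⟨x1, x2, by linarith, by linear_combination heq, hx1, hx2⟩
end

section
/- Let d1, d2 be positive integers, d = d1 + d2, and suppose S1, S2 are real numbers satisfying 1/2 - 8/(3(4d1+1)) < S1 ≤ 1/2 - 1/(2d1) and 1/2 - 8/(3(4d2+1)) < S2 ≤ 1/2 - 1/(2d2). Let T = 1/2 - (2d+1)/(3d(d+1)). Then S1 + S2 < 2T < 1 and 1/(1-2S1) + 1/(1-2S2) > 1/(1-2T). -/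
/-!
Write `uᵢ = 1 - 2Sᵢ`, so `1/dᵢ ≤ uᵢ < 16/(3(4dᵢ+1))`, and `1 - 2T = 2(2d+1)/(3d(d+1))`.
For the first inequality, the harmonic–arithmetic mean inequality gives
`u₁ + u₂ ≥ 1/d₁ + 1/d₂ ≥ 4/d`, which exceeds `2(1 - 2T)` because `2d + 1 < 3(d + 1)`.
For the second, `1/u₁ + 1/u₂ > 3(4d₁+1)/16 + 3(4d₂+1)/16 = 3(2d+1)/8`, and
`3(2d+1)/8 ≥ 3d(d+1)/(2(2d+1)) = 1/(1-2T)` is `(2d+1)² ≥ 4d(d+1)`.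
-/

noncomputable def threshold (d : ℝ) : ℝ := 1 / 2 - (2 * d + 1) / (3 * d * (d + 1))

lemma four_div_add_le_one_div_add_one_div {x y : ℝ} (hx : 0 < x) (hy : 0 < y) :
    4 / (x + y) ≤ 1 / x + 1 / y := by
  rw [div_add_div _ _ hx.ne' hy.ne', div_le_div_iff₀ (by positivity) (by positivity)]
  nlinarith [sq_nonneg (x - y)]

lemma one_sub_two_mul_threshold (d : ℝ) :
    1 - 2 * threshold d = 2 * (2 * d + 1) / (3 * d * (d + 1)) := by
  unfold threshold
  ring

section threshold

variable {d : ℝ}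

lemma two_mul_threshold_lt_one (hd : 0 < d) : 2 * threshold d < 1 := by
  have : 0 < 1 - 2 * threshold d := by rw [one_sub_two_mul_threshold]; positivity
  linarith

lemma one_sub_two_div_lt_two_mul_threshold (hd : 0 < d) : 1 - 2 / d < 2 * threshold d := by
  suffices 1 - 2 * threshold d < 2 / d by linarith
  rw [one_sub_two_mul_threshold, div_lt_div_iff₀ (by positivity) hd]
  nlinarith

lemma one_div_one_sub_two_mul_threshold_le (hd : 0 < d) :
    1 / (1 - 2 * threshold d) ≤ 3 * (2 * d + 1) / 8 := by
  rw [one_sub_two_mul_threshold, one_div_div, div_le_div_iff₀ (by positivity) (by norm_num)]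
  nlinarith

end threshold

lemma lt_one_div_one_sub_two_mul {e S : ℝ} (he : 0 < 4 * e + 1)
    (hl : 1 / 2 - 8 / (3 * (4 * e + 1)) < S) (hu : S < 1 / 2) :
    3 * (4 * e + 1) / 16 < 1 / (1 - 2 * S) := by
  rw [lt_one_div (by positivity) (by linarith), one_div_div]
  linarith [show 16 / (3 * (4 * e + 1)) = 2 * (8 / (3 * (4 * e + 1))) by ring]

/-- For positive integers `d1, d2`, `d = d1 + d2`, and reals `S1, S2` with
`1/2 - 8/(3(4dᵢ+1)) < Sᵢ ≤ 1/2 - 1/(2dᵢ)`, setting `T = 1/2 - (2d+1)/(3d(d+1))`,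
one has `S1 + S2 < 2T < 1` and `1/(1-2S1) + 1/(1-2S2) > 1/(1-2T)`. -/
theorem stmt_18 (d1 d2 : ℕ) (hd1 : 0 < d1) (hd2 : 0 < d2) (S1 S2 : ℝ)
    (hS1l : 1 / 2 - 8 / (3 * (4 * (d1 : ℝ) + 1)) < S1)
    (hS1u : S1 ≤ 1 / 2 - 1 / (2 * (d1 : ℝ)))
    (hS2l : 1 / 2 - 8 / (3 * (4 * (d2 : ℝ) + 1)) < S2)
    (hS2u : S2 ≤ 1 / 2 - 1 / (2 * (d2 : ℝ)))
    (T : ℝ)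
    (hT : T = 1 / 2 - (2 * ((d1 : ℝ) + d2) + 1) / (3 * ((d1 : ℝ) + d2) * (((d1 : ℝ) + d2) + 1))) :
    S1 + S2 < 2 * T ∧ 2 * T < 1 ∧
      1 / (1 - 2 * S1) + 1 / (1 - 2 * S2) > 1 / (1 - 2 * T) := by
  have ha : (0 : ℝ) < d1 := Nat.cast_pos.mpr hd1
  have hb : (0 : ℝ) < d2 := Nat.cast_pos.mpr hd2
  obtain rfl : T = threshold (d1 + d2) := hT
  have hS1 : S1 < 1 / 2 := hS1u.trans_lt (by simp [ha])
  have hS2 : S2 < 1 / 2 := hS2u.trans_lt (by simp [hb])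
  refine ⟨?_, two_mul_threshold_lt_one (by positivity), ?_⟩
  · have hmean := four_div_add_le_one_div_add_one_div ha hb
    have hgap := one_sub_two_div_lt_two_mul_threshold (d := d1 + d2) (by positivity)
    have hsplit : 1 / (2 * (d1 : ℝ)) + 1 / (2 * d2) = (1 / d1 + 1 / d2) / 2 := by ring
    have hhalf : 2 / ((d1 : ℝ) + d2) = 4 / (d1 + d2) / 2 := by ring
    linarith
  · have h1 := lt_one_div_one_sub_two_mul (by positivity) hS1l hS1
    have h2 := lt_one_div_one_sub_two_mul (by positivity) hS2l hS2
    have hinv := one_div_one_sub_two_mul_threshold_le (d := d1 + d2) (by positivity)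
    linarith
end
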